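/- Assume ⟨C_α : α a limit ordinal < ω₂⟩ is a □_{ω₁}-sequence. Then there is β < ω₁ such that the set E_β = {α < ω₂ : cf(α) = ω and C_α has order type β} is stationary in ω₂; moreover, every such stationary set E_β is non-reflecting: for every limit ordinal γ < ω₂ there is a subset of γ that is closed unbounded in γ and disjoint from E_β. -/

import Mathlib

universe u v w x t

open FirstOrder

noncomputable section

/-- `ω₁` as an ordinal. -/
def omega1 : Ordinal.{0} := (Cardinal.aleph 1).ord

/-- `ω₂` as an ordinal. -/
def omega2 : Ordinal.{0} := (Cardinal.aleph 2).ord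

/-- `ω₃` as an ordinal. -/
def omega3 : Ordinal.{0} := (Cardinal.aleph 3).ord

/-- In a round of the EF game the reply must lie on the opposite side:
if `x ∈ A` then `y ∈ B` and vice versa. -/
def Opp {M : Type u} {N : Type v} : M ⊕ N → M ⊕ N → Prop
  | Sum.inl _, Sum.inr _ => True
  | Sum.inr _, Sum.inl _ => True
  | _, _ => False

/-- The pairs of `A × B` named by a single round `(x, y)` of the game. -/
def pairRel {M : Type u} {N : Type v} (x y : M ⊕ N) : Set (M × N) :=
  {p | (x = Sum.inl p.1 ∧ y = Sum.inr p.2) ∨ (x = Sum.inr p.2 ∧ y = Sum.inl p.1)}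

/-- `π ⊆ A × B` is a partial isomorphism between the `L`-structures `SM` and `SN`:
it is an injective partial function and preserves all relations in both directions
(the vocabulary is relational). -/
def IsPartialIso (L : FirstOrder.Language.{u, v}) {M : Type w} {N : Type x} (SM : L.Structure M)
    (SN : L.Structure N) (π : Set (M × N)) : Prop :=
  (∀ p ∈ π, ∀ q ∈ π, (p.1 = q.1 ↔ p.2 = q.2)) ∧
  ∀ (n : ℕ) (R : L.Relations n) (a : Fin n → M) (b : Fin n → N),
    (∀ i, (a i, b i) ∈ π) → (SM.RelMap R a ↔ SN.RelMap R b)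

/-- The relation `π ⊆ A × B` determined by a play of length `γ`;
`(p β).1` is the move of player ∀ and `(p β).2` the reply of player ∃ in round `β`. -/
def playRel {M : Type u} {N : Type v} (γ : Ordinal.{t})
    (p : Ordinal.{t} → (M ⊕ N) × (M ⊕ N)) : Set (M × N) :=
  ⋃ β ∈ Set.Iio γ, pairRel (p β).1 (p β).2

/-- Player ∃ wins the play `p` of the game of length `γ`: in every round the reply of ∃ is on
the opposite side, and the resulting relation is a partial isomorphism. -/
def ExistsWinsPlay (L : FirstOrder.Language.{u, v}) {M : Type w} {N : Type x} (SM : L.Structure M)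
    (SN : L.Structure N) (γ : Ordinal.{t}) (p : Ordinal.{t} → (M ⊕ N) × (M ⊕ N)) : Prop :=
  (∀ β < γ, Opp (p β).1 (p β).2) ∧ IsPartialIso L SM SN (playRel γ p)

/-- Player ∃ has a winning strategy in the Ehrenfeucht–Fraïssé game of length `γ` between the
`L`-structures `SM` and `SN`.  A strategy of ∃ assigns a reply to every position
`(β, history, current move of ∀)`; it may depend only on the rounds `< β` of the history.
It is winning if every play in which all replies of ∃ are given by the strategy is won by ∃. -/
def ExistsWinsEF (L : FirstOrder.Language.{u, v}) {M : Type w} {N : Type x} (SM : L.Structure M)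
    (SN : L.Structure N) (γ : Ordinal.{t}) : Prop :=
  ∃ σ : Ordinal.{t} → (Ordinal.{t} → (M ⊕ N) × (M ⊕ N)) → (M ⊕ N) → (M ⊕ N),
    (∀ β pl pl' x, (∀ i < β, pl i = pl' i) → σ β pl x = σ β pl' x) ∧
    ∀ pl : Ordinal.{t} → (M ⊕ N) × (M ⊕ N),
      (∀ β < γ, (pl β).2 = σ β pl (pl β).1) → ExistsWinsPlay L SM SN γ pl

/-- Player ∀ has a winning strategy in the Ehrenfeucht–Fraïssé game of length `γ` between the
`L`-structures `SM` and `SN`.  A strategy of ∀ assigns a move to every position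
`(β, history)`; it may depend only on the rounds `< β` of the history.  It is winning if
no play in which all moves of ∀ are given by the strategy is won by ∃. -/
def ForallWinsEF (L : FirstOrder.Language.{u, v}) {M : Type w} {N : Type x} (SM : L.Structure M)
    (SN : L.Structure N) (γ : Ordinal.{t}) : Prop :=
  ∃ σ : Ordinal.{t} → (Ordinal.{t} → (M ⊕ N) × (M ⊕ N)) → (M ⊕ N),
    (∀ β pl pl', (∀ i < β, pl i = pl' i) → σ β pl = σ β pl') ∧
    ∀ pl : Ordinal.{t} → (M ⊕ N) × (M ⊕ N),
      (∀ β < γ, (pl β).1 = σ β pl) → ¬ ExistsWinsPlay L SM SN γ pl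

/-- Isomorphism of structures in a relational vocabulary: a bijection preserving all
relations in both directions. -/
def StructIso (L : FirstOrder.Language.{u, v}) {M : Type w} {N : Type x} (SM : L.Structure M)
    (SN : L.Structure N) : Prop :=
  ∃ f : M ≃ N, ∀ (n : ℕ) (R : L.Relations n) (a : Fin n → M),
    SM.RelMap R a ↔ SN.RelMap R (fun i => f (a i))

/-- The relational vocabulary for abelian groups: one ternary relation (for `x + y = z`). -/
def addLang : FirstOrder.Language.{0, 0} where
  Functions := fun _ => Empty
  Relations := fun n => PLift (n = 3)

/-- An abelian group as an `addLang`-structure: the ternary relation holds of `(x, y, z)`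
iff `x + y = z`. -/
def addStructure (G : Type u) [AddCommGroup G] : addLang.Structure G where
  funMap := fun f _ => f.elim
  RelMap := fun {n} r v =>
    have h : n = 3 := r.down
    v ⟨0, by omega⟩ + v ⟨1, by omega⟩ = v ⟨2, by omega⟩

/-- `F(ω₁)`, the free abelian group on `ℵ₁` generators. -/
abbrev Fomega1 : Type := FreeAbelianGroup omega1.ToType

/-- Player ∃ has a winning strategy in `G_γ(A, B)` for abelian groups `A`, `B`. -/
def ExistsWinsG (A : Type u) [AddCommGroup A] (B : Type v) [AddCommGroup B]
    (γ : Ordinal.{0}) : Prop :=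
  ExistsWinsEF addLang (addStructure A) (addStructure B) γ

/-- Player ∀ has a winning strategy in `G_γ(A, B)` for abelian groups `A`, `B`. -/
def ForallWinsG (A : Type u) [AddCommGroup A] (B : Type v) [AddCommGroup B]
    (γ : Ordinal.{0}) : Prop :=
  ForallWinsEF addLang (addStructure A) (addStructure B) γ

/-- `G` is a free abelian group. -/
def FreeAbelian (G : Type u) [AddCommGroup G] : Prop := Module.Free ℤ G

/-- `γ` is a limit point of the set `C` of ordinals. -/
def IsLimitPt (C : Set Ordinal.{0}) (γ : Ordinal.{0}) : Prop :=
  0 < γ ∧ ∀ β < γ, ∃ x ∈ C, β < x ∧ x < γ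

/-- `C` is closed below `α`: every limit point of `C` below `α` belongs to `C`. -/
def ClosedIn (C : Set Ordinal.{0}) (α : Ordinal.{0}) : Prop :=
  ∀ γ < α, IsLimitPt C γ → γ ∈ C

/-- `C` is a closed unbounded (cub) subset of `α`. -/
def ClubIn (C : Set Ordinal.{0}) (α : Ordinal.{0}) : Prop :=
  C ⊆ Set.Iio α ∧ ClosedIn C α ∧ ∀ β < α, ∃ x ∈ C, β ≤ x

/-- `S` is stationary in `κ`: it meets every cub subset of `κ`. -/
def StationaryIn (S : Set Ordinal.{0}) (κ : Ordinal.{0}) : Prop :=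
  ∀ C, ClubIn C κ → (S ∩ C).Nonempty

/-- The set `s` of ordinals has order type `o`: there is an order isomorphism from the
ordinals below `o` onto `s`. -/
def HasOrderType (s : Set Ordinal.{0}) (o : Ordinal.{0}) : Prop :=
  ∃ e : Ordinal.{0} → Ordinal.{0}, StrictMonoOn e (Set.Iio o) ∧ e '' Set.Iio o = s

/-- `C ⊆ ω₂` is `ω₁`-closed: the supremum of every strictly increasing `ω₁`-sequence of
elements of `C` lies in `C`. -/
def Omega1Closed (C : Set Ordinal.{0}) : Prop :=
  ∀ f : Ordinal.{0} → Ordinal.{0}, StrictMonoOn f (Set.Iio omega1) →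
    (∀ i < omega1, f i ∈ C) → sSup (f '' Set.Iio omega1) ∈ C

/-- `S ⊆ ω₂` is `ω₁`-stationary: it meets every `ω₁`-closed unbounded subset of `ω₂`. -/
def Omega1Stationary (S : Set Ordinal.{0}) : Prop :=
  ∀ C, C ⊆ Set.Iio omega2 → Omega1Closed C → (∀ β < omega2, ∃ x ∈ C, β ≤ x) →
    (S ∩ C).Nonempty

/-- A `□_{ω₁}`-sequence: `C α` is cub in `α` for limit `α < ω₂`, is countable when
`cf(α) = ω`, and the sequence is coherent at limit points. -/
def IsSquareOmega1 (C : Ordinal.{0} → Set Ordinal.{0}) : Prop :=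
  ∀ α, α < omega2 → Order.IsSuccLimit α →
    ClubIn (C α) α ∧
    (Ordinal.cof α = Cardinal.aleph0 → Cardinal.mk (C α) = Cardinal.aleph0) ∧
    ∀ γ, γ < α → IsLimitPt (C α) γ → C γ = C α ∩ Set.Iio γ

/-- An abelian group is `ℵ₁`-free if all of its countable subgroups are free. -/
def Aleph1Free (G : Type u) [AddCommGroup G] : Prop :=
  ∀ H : AddSubgroup G, (H : Set G).Countable → FreeAbelian H

/-- The induced structure on a subset of a structure in a relational vocabulary. -/
def restrictStructure (L : FirstOrder.Language.{u, v}) [L.IsRelational] {M : Type w}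
    (SM : L.Structure M) (s : Set M) : L.Structure s where
  funMap := fun f _ => isEmptyElim f
  RelMap := fun r v => SM.RelMap r fun i => (v i : M)

/-- The relational vocabulary with a single binary relation symbol. -/
def binLang : FirstOrder.Language.{0, 0} where
  Functions := fun _ => Empty
  Relations := fun n => PLift (n = 2)

/-- The `binLang`-structure given by a binary relation `r`. -/
def binStructure {M : Type u} (r : M → M → Prop) : binLang.Structure M where
  funMap := fun f _ => f.elim
  RelMap := fun {n} R v =>
    have h : n = 2 := R.down
    r (v ⟨0, by omega⟩) (v ⟨1, by omega⟩)

end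




lemma seg_eq {h : Ordinal.{0} → Ordinal.{0}} {a b : Ordinal}
    (mono : StrictMonoOn h (Set.Iio a)) (img : h '' Set.Iio a = Set.Iio b) : a = b := by
  have key : ∀ x, x < a → h x = x := by
    intro x
    induction x using Ordinal.induction with
    | h x IH =>
      intro hx
      have h1 : x ≤ h x := by
        by_contra hlt
        push_neg at hlt
        have := IH (h x) hlt (hlt.trans hx)
        have := mono (show h x ∈ Set.Iio a from (hlt.trans hx)) hx hlt
        rw [‹h (h x) = h x›] at this
        exact lt_irrefl _ this
      rcases h1.lt_or_eq with h2 | h2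
      · exfalso
        have hxb : x ∈ Set.Iio b := by
          have : h x ∈ Set.Iio b := img ▸ Set.mem_image_of_mem h hx
          exact lt_trans h2 this
        rw [← img] at hxb
        obtain ⟨y, hy, hyx⟩ := hxb
        rcases lt_trichotomy y x with h3 | h3 | h3
        · exact absurd (IH y h3 hy ▸ hyx) h3.ne
        · subst h3; exact absurd hyx h2.ne'
        · have := mono hx hy h3
          rw [hyx] at this
          exact absurd (h2.trans this) (lt_irrefl x)
      · exact h2.symm
  have : Set.Iio a = Set.Iio b := by
    rw [← img]
    ext z
    constructor
    · intro hz; exact ⟨z, hz, key z hz⟩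
    · rintro ⟨y, hy, rfl⟩; rwa [key y hy]
  have h1 : a ≤ b := le_of_not_gt fun h => lt_irrefl b ((Set.ext_iff.1 this b).1 h)
  have h2 : b ≤ a := le_of_not_gt fun h => lt_irrefl a ((Set.ext_iff.1 this a).2 h)
  exact le_antisymm h1 h2


lemma hot_unique {s : Set Ordinal.{0}} {o o' : Ordinal}
    (h1 : HasOrderType s o) (h2 : HasOrderType s o') : o = o' := by
  obtain ⟨e, he, hes⟩ := h1
  obtain ⟨e', he', hes'⟩ := h2
  have key : ∀ x ∈ Set.Iio o, ∃ y ∈ Set.Iio o', e' y = e x := by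
    intro x hx
    have : e x ∈ s := hes ▸ Set.mem_image_of_mem e hx
    rw [← hes'] at this
    obtain ⟨y, hy, hye⟩ := this
    exact ⟨y, hy, hye⟩
  classical
  set g : Ordinal → Ordinal := fun x =>
    if hx : x ∈ Set.Iio o then (key x hx).choose else 0 with hg
  have hgmem : ∀ x (hx : x ∈ Set.Iio o), g x ∈ Set.Iio o' ∧ e' (g x) = e x := by
    intro x hx
    simp only [hg, dif_pos hx]
    exact ⟨(key x hx).choose_spec.1, (key x hx).choose_spec.2⟩
  have hmono : StrictMonoOn g (Set.Iio o) := by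
    intro x1 hx1 x2 hx2 hlt
    by_contra hle
    push_neg at hle
    have h1 := (hgmem x1 hx1)
    have h2 := (hgmem x2 hx2)
    have : e' (g x2) ≤ e' (g x1) := by
      rcases hle.lt_or_eq with h | h
      · exact (he' h2.1 h1.1 h).le
      · rw [h]
    rw [h1.2, h2.2] at this
    exact absurd (he hx1 hx2 hlt) (not_lt.2 this)
  have himg : g '' Set.Iio o = Set.Iio o' := by
    ext z
    constructor
    · rintro ⟨y, hy, rfl⟩; exact (hgmem y hy).1
    · intro hz
      have : e' z ∈ s := hes' ▸ Set.mem_image_of_mem e' hz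
      rw [← hes] at this
      obtain ⟨x, hx, hxe⟩ := this
      refine ⟨x, hx, ?_⟩
      have h1 := hgmem x hx
      exact he'.injOn h1.1 hz (by rw [h1.2, hxe])
  exact seg_eq hmono himg


lemma hot_lt {s t : Set Ordinal.{0}} {α o o' : Ordinal}
    (hst : s = t ∩ Set.Iio α) (hα : α ∈ t)
    (h1 : HasOrderType s o) (h2 : HasOrderType t o') : o < o' := by
  obtain ⟨e', he', hes'⟩ := h2
  rw [← hes'] at hα
  obtain ⟨y₀, hy₀, hy₀e⟩ := hα
  have hseg : HasOrderType s y₀ := by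
    refine ⟨e', he'.mono (Set.Iio_subset_Iio hy₀.le), ?_⟩
    rw [hst]
    ext z
    constructor
    · rintro ⟨x, hx, rfl⟩
      have hx' : x ∈ Set.Iio o' := Set.mem_Iio.2 ((Set.mem_Iio.1 hx).trans hy₀)
      exact ⟨hes' ▸ Set.mem_image_of_mem e' hx',
        by rw [← hy₀e]; exact he' hx' (Set.mem_Iio.2 hy₀) (Set.mem_Iio.1 hx)⟩
    · rintro ⟨hzt, hzα⟩
      rw [← hes'] at hzt
      obtain ⟨x, hx, rfl⟩ := hzt
      refine ⟨x, ?_, rfl⟩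
      by_contra hge
      have hge' : y₀ ≤ x := le_of_not_gt (by simpa using hge)
      have : e' y₀ ≤ e' x := by
        rcases hge'.lt_or_eq with h | h
        · exact (he' (Set.mem_Iio.2 hy₀) hx h).le
        · rw [h]
      rw [hy₀e] at this
      exact absurd hzα (not_lt.2 this)
  rw [hot_unique h1 hseg]
  exact hy₀


lemma hot_exists {s : Set Ordinal.{0}} (hs : Cardinal.mk s = Cardinal.aleph0) :
    ∃ β, β < omega1 ∧ HasOrderType s β := by
  classical
  let r : s → s → Prop := Subrel (· < ·) (· ∈ s)
  have hwo : IsWellOrder s r := inferInstance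
  have h1 : Ordinal.type r < Ordinal.lift.{1} omega1 := by
    have hcard : (Ordinal.type r).card = Cardinal.mk s := Ordinal.card_type r
    have : Ordinal.lift.{1} omega1 = (Cardinal.aleph 1 : Cardinal.{1}).ord := by
      rw [omega1, Cardinal.lift_ord, Cardinal.lift_aleph, Ordinal.lift_one]
    rw [this, Cardinal.lt_ord, hcard, hs]
    exact Cardinal.aleph0_lt_aleph_one
  obtain ⟨β, hβ, hlift⟩ := Ordinal.lt_lift_iff.1 h1
  refine ⟨β, hβ, ?_⟩
  have hlt : ∀ x, x < β → Ordinal.lift.{1} x < Ordinal.type r := by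
    intro x hx
    rw [← hlift]
    exact Ordinal.lift_lt.2 hx
  set e : Ordinal.{0} → Ordinal.{0} := fun x =>
    if hx : x < β then ((Ordinal.enum r ⟨Ordinal.lift.{1} x, hlt x hx⟩ : s) : Ordinal) else 0
    with he
  refine ⟨e, ?_, ?_⟩
  · intro x1 hx1 x2 hx2 h12
    have hx1' : x1 < β := hx1
    have hx2' : x2 < β := hx2
    simp only [he, dif_pos hx1', dif_pos hx2']
    exact (Ordinal.enum_lt_enum (r := r)).2 (Subtype.mk_lt_mk.2 (Ordinal.lift_lt.2 h12))
  · ext z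
    constructor
    · rintro ⟨x, hx, rfl⟩
      have hx' : x < β := hx
      simp only [he, dif_pos hx']
      exact (Ordinal.enum r ⟨Ordinal.lift.{1} x, hlt x hx'⟩).2
    · intro hz
      have htyp : Ordinal.typein r ⟨z, hz⟩ < Ordinal.type r := Ordinal.typein_lt_type r _
      rw [← hlift] at htyp
      obtain ⟨x, hx, hxe⟩ := Ordinal.lt_lift_iff.1 htyp
      refine ⟨x, hx, ?_⟩
      simp only [he, dif_pos hx]
      have : (⟨Ordinal.lift.{1} x, hlt x hx⟩ : Set.Iio (Ordinal.type r)) =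
          ⟨Ordinal.typein r ⟨z, hz⟩, Ordinal.typein_lt_type r _⟩ := by
        simp [hxe]
      rw [this, Ordinal.enum_typein]


lemma limitPt_mono {C C' : Set Ordinal.{0}} {γ : Ordinal} (h : C ⊆ C')
    (hpt : IsLimitPt C γ) : IsLimitPt C' γ := by
  refine ⟨hpt.1, fun β hβ => ?_⟩
  obtain ⟨x, hx, h1, h2⟩ := hpt.2 β hβ
  exact ⟨x, h hx, h1, h2⟩


lemma chain_lt_iSup {f : ℕ → Ordinal.{0}} (hmono : ∀ n, f n < f (n + 1)) (n : ℕ) :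
    f n < ⨆ m, f m :=
  lt_of_lt_of_le (hmono n) (Ordinal.le_iSup f (n + 1))


lemma isLimit_iSup_chain {f : ℕ → Ordinal.{0}} (hmono : ∀ n, f n < f (n + 1)) :
    Order.IsSuccLimit (⨆ m, f m) := by
  rw [Ordinal.isSuccLimit_iff, Order.isSuccPrelimit_iff_succ_lt]
  constructor
  · have h0 := chain_lt_iSup hmono 0
    intro h
    rw [h] at h0
    exact absurd h0 (not_lt_of_ge zero_le)
  · intro b hb
    obtain ⟨n, hn⟩ := Ordinal.lt_iSup_iff.1 hb
    exact lt_of_le_of_lt (Order.succ_le_of_lt hn) (chain_lt_iSup hmono n)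


lemma cof_iSup_chain {f : ℕ → Ordinal.{0}} (hmono : ∀ n, f n < f (n + 1)) :
    Ordinal.cof (⨆ m, f m) = Cardinal.aleph0 := by
  have heq : (⨆ m, f m) = Ordinal.lsub f := by
    apply le_antisymm
    · exact Ordinal.iSup_le fun n => (Ordinal.lt_lsub f n).le
    · exact (Ordinal.lsub_le_iff).2 (chain_lt_iSup hmono)
  apply le_antisymm
  · rw [heq]
    exact (Ordinal.cof_lsub_le f).trans_eq Cardinal.mk_nat
  · exact Ordinal.aleph0_le_cof.2 (isLimit_iSup_chain hmono)


lemma limitPt_of_between {C : Set Ordinal.{0}} {f : ℕ → Ordinal.{0}}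
    (hmono : ∀ n, f n < f (n + 1))
    (h : ∀ n, ∃ x ∈ C, f n ≤ x ∧ x ≤ f (n + 1)) : IsLimitPt C (⨆ m, f m) := by
  constructor
  · exact lt_of_le_of_lt zero_le (chain_lt_iSup hmono 0)
  · intro b hb
    obtain ⟨n, hn⟩ := Ordinal.lt_iSup_iff.1 hb
    obtain ⟨x, hx, h1, h2⟩ := h n
    exact ⟨x, hx, lt_of_lt_of_le hn h1,
      lt_of_le_of_lt h2 (chain_lt_iSup hmono (n + 1))⟩


lemma succ_club {γ : Ordinal.{0}} (hlim : Order.IsSuccLimit γ)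
    (hcof : Ordinal.cof γ = Cardinal.aleph0) :
    ∃ D : Set Ordinal.{0}, ClubIn D γ ∧ ∀ x ∈ D, ∃ y, x = y + 1 := by
  classical
  obtain ⟨ι, f, hlsub, hι⟩ := Ordinal.exists_lsub_cof γ
  rw [hcof] at hι
  have : Nonempty (ι ≃ ℕ) := by
    rw [← Cardinal.mk_nat] at hι
    exact Cardinal.eq.1 hι
  obtain ⟨eqv⟩ := this
  set f' : ℕ → Ordinal := fun n => f (eqv.symm n) with hf'
  have hf'lt : ∀ n, f' n < γ := fun n => hlsub ▸ Ordinal.lt_lsub f _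
  have hf'cof : ∀ ξ < γ, ∃ n, ξ ≤ f' n := by
    intro ξ hξ
    rw [← hlsub] at hξ
    obtain ⟨i, hi⟩ := Ordinal.lt_lsub_iff.1 hξ
    refine ⟨eqv i, ?_⟩
    show ξ ≤ f (eqv.symm (eqv i))
    rwa [Equiv.symm_apply_apply]
  set g : ℕ → Ordinal := fun n => Nat.rec (f' 0 + 1) (fun n ih => max ih (f' (n + 1)) + 1) n
    with hg
  have hglt : ∀ n, g n < γ := by
    intro n
    induction n with
    | zero => exact hlim.succ_lt (hf'lt 0)
    | succ n ih => exact hlim.succ_lt (max_lt ih (hf'lt (n + 1)))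
  have hgmono : ∀ n, g n < g (n + 1) := by
    intro n
    calc g n ≤ max (g n) (f' (n + 1)) := le_max_left _ _
    _ < max (g n) (f' (n + 1)) + 1 := lt_add_one _
  have hgsucc : ∀ n, ∃ y, g n = y + 1 := by
    intro n
    cases n with
    | zero => exact ⟨f' 0, rfl⟩
    | succ n => exact ⟨_, rfl⟩
  have hgf : ∀ n, f' n < g n := by
    intro n
    cases n with
    | zero => exact lt_add_one _
    | succ n => exact lt_of_le_of_lt (le_max_right _ _) (lt_add_one _)
  have hgstrict : StrictMono g := strictMono_nat_of_lt_succ hgmono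
  refine ⟨Set.range g, ⟨?_, ?_, ?_⟩, ?_⟩
  · rintro x ⟨n, rfl⟩
    exact hglt n
  · -- closed: no limit points below γ
    rintro δ hδ ⟨hδ0, hpt⟩
    exfalso
    have hex : ∃ n, δ ≤ g n := by
      obtain ⟨n, hn⟩ := hf'cof δ hδ
      exact ⟨n, hn.trans (hgf n).le⟩
    classical
    set k := Nat.find hex with hk
    have hkle : δ ≤ g k := Nat.find_spec hex
    cases hkk : k with
    | zero =>
      obtain ⟨x, ⟨m, rfl⟩, hx0, hxδ⟩ := hpt 0 hδ0
      have : g 0 ≤ g m := hgstrict.monotone (Nat.zero_le m)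
      rw [← hkk] at this
      exact absurd (lt_of_lt_of_le hxδ hkle) (not_lt.2 this)
    | succ j =>
      have hjlt : g j < δ := by
        have := Nat.find_min hex (by omega : j < k)
        push_neg at this
        exact this
      obtain ⟨x, ⟨m, rfl⟩, hjx, hxδ⟩ := hpt (g j) hjlt
      have hmk : m < k := by
        by_contra hmk
        push_neg at hmk
        exact absurd (lt_of_lt_of_le hxδ (hkle.trans (hgstrict.monotone hmk)))
          (lt_irrefl _)
      have : g m ≤ g j := hgstrict.monotone (by omega)
      exact absurd hjx (not_lt.2 this)
  · intro ξ hξ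
    obtain ⟨n, hn⟩ := hf'cof ξ hξ
    exact ⟨g n, ⟨n, rfl⟩, hn.trans (hgf n).le⟩
  · rintro x ⟨n, rfl⟩
    exact hgsucc n


lemma acc_unbounded {Cγ : Set Ordinal.{0}} {γ : Ordinal.{0}} (hlim : Order.IsSuccLimit γ)
    (hcof : Cardinal.aleph0 < Ordinal.cof γ) (hclub : ClubIn Cγ γ) :
    ∀ ξ < γ, ∃ δ, δ < γ ∧ IsLimitPt Cγ δ ∧ ξ ≤ δ := by
  classical
  intro ξ hξ
  set nxt : Ordinal → Ordinal := fun η =>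
    if h : η < γ then (hclub.2.2 η h).choose else 0 with hnxt
  have hnxtspec : ∀ η, η < γ → nxt η ∈ Cγ ∧ η ≤ nxt η := by
    intro η hη
    simp only [hnxt, dif_pos hη]
    obtain ⟨h1, h2⟩ := (hclub.2.2 η hη).choose_spec
    exact ⟨h1, h2⟩
  set f : ℕ → Ordinal := fun n => Nat.rec (nxt ξ) (fun _ ih => nxt (ih + 1)) n with hf
  have hflt : ∀ n, f n < γ := by
    intro n
    induction n with
    | zero => exact hclub.1 (hnxtspec ξ hξ).1
    | succ n ih => exact hclub.1 (hnxtspec (f n + 1) (hlim.succ_lt ih)).1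
  have hfmem : ∀ n, f n ∈ Cγ := by
    intro n
    cases n with
    | zero => exact (hnxtspec ξ hξ).1
    | succ n => exact (hnxtspec (f n + 1) (hlim.succ_lt (hflt n))).1
  have hfmono : ∀ n, f n < f (n + 1) := by
    intro n
    have := (hnxtspec (f n + 1) (hlim.succ_lt (hflt n))).2
    exact lt_of_lt_of_le (lt_add_one _) this
  refine ⟨⨆ n, f n, ?_, ?_, ?_⟩
  · exact Ordinal.iSup_lt_ord (by rwa [Cardinal.mk_nat]) hflt
  · exact limitPt_of_between hfmono fun n => ⟨f (n + 1), hfmem (n + 1), (hfmono n).le, le_refl _⟩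
  · exact le_trans (hnxtspec ξ hξ).2 (Ordinal.le_iSup f 0)


lemma nonreflecting (C : Ordinal.{0} → Set Ordinal.{0}) (hC : IsSquareOmega1 C) (β : Ordinal.{0})
    (γ : Ordinal.{0}) (hγ2 : γ < omega2) (hγlim : Order.IsSuccLimit γ) :
    ∃ D : Set Ordinal.{0}, ClubIn D γ ∧
      D ∩ {α | α < omega2 ∧ Ordinal.cof α = Cardinal.aleph0 ∧ HasOrderType (C α) β} = ∅ := by
  classical
  set E := {α | α < omega2 ∧ Ordinal.cof α = Cardinal.aleph0 ∧ HasOrderType (C α) β} with hE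
  by_cases hcof : Ordinal.cof γ = Cardinal.aleph0
  · obtain ⟨D, hclub, hsucc⟩ := succ_club hγlim hcof
    refine ⟨D, hclub, ?_⟩
    rw [Set.eq_empty_iff_forall_notMem]
    rintro x ⟨hxD, hxE⟩
    obtain ⟨y, rfl⟩ := hsucc x hxD
    have h1 : Ordinal.cof (y + 1) = 1 := by
      rw [Ordinal.add_one_eq_succ, Ordinal.cof_succ]
    rw [hxE.2.1] at h1
    exact Cardinal.one_lt_aleph0.ne' h1
  · have hcof' : Cardinal.aleph0 < Ordinal.cof γ :=
      (Ordinal.aleph0_le_cof.2 hγlim).lt_of_ne (fun h => hcof h.symm)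
    obtain ⟨hclubγ, _, hcoh⟩ := hC γ hγ2 hγlim
    set A := {α | α < γ ∧ IsLimitPt (C γ) α} with hA
    have hAsub : A ⊆ C γ := fun α hα => hclubγ.2.1 α hα.1 hα.2
    have hAclosed : ClosedIn A γ := by
      intro δ hδ hpt
      exact ⟨hδ, limitPt_mono hAsub hpt⟩
    have key : ∀ α ∈ A ∩ E, ∀ α' ∈ A ∩ E, α < α' → False := by
      rintro α ⟨hαA, hαE⟩ α' ⟨hα'A, hα'E⟩ hlt
      have hca : C α = C γ ∩ Set.Iio α := hcoh α hαA.1 hαA.2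
      have hca' : C α' = C γ ∩ Set.Iio α' := hcoh α' hα'A.1 hα'A.2
      have hαmem : α ∈ C α' := by
        rw [hca']
        exact ⟨hAsub hαA, hlt⟩
      have hsub : C α = C α' ∩ Set.Iio α := by
        rw [hca, hca']
        ext z
        constructor
        · rintro ⟨h1, h2⟩
          exact ⟨⟨h1, lt_trans h2 hlt⟩, h2⟩
        · rintro ⟨⟨h1, _⟩, h2⟩
          exact ⟨h1, h2⟩
      exact lt_irrefl β (hot_lt hsub hαmem hαE.2.2 hα'E.2.2)
    have huniq : ∀ α ∈ A ∩ E, ∀ α' ∈ A ∩ E, α = α' := by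
      intro α hα α' hα'
      rcases lt_trichotomy α α' with h | h | h
      · exact absurd (key α hα α' hα' h) not_false
      · exact h
      · exact absurd (key α' hα' α hα h) not_false
    by_cases hne : (A ∩ E).Nonempty
    · obtain ⟨α₀, hα₀⟩ := hne
      refine ⟨A ∩ Set.Ioi α₀, ⟨?_, ?_, ?_⟩, ?_⟩
      · rintro x ⟨hx, _⟩
        exact hx.1
      · intro δ hδ hpt
        refine ⟨hAclosed δ hδ (limitPt_mono Set.inter_subset_left hpt), ?_⟩
        obtain ⟨x, ⟨_, hx2⟩, _, hxδ⟩ := hpt.2 0 hpt.1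
        exact lt_trans hx2 hxδ
      · intro ξ hξ
        have hbound : max ξ (α₀ + 1) < γ :=
          max_lt hξ (hγlim.succ_lt hα₀.1.1)
        obtain ⟨δ, hδγ, hδpt, hδge⟩ := acc_unbounded hγlim hcof' hclubγ _ hbound
        refine ⟨δ, ⟨⟨hδγ, hδpt⟩, ?_⟩, le_trans (le_max_left _ _) hδge⟩
        exact lt_of_lt_of_le (lt_of_lt_of_le (lt_add_one α₀) (le_max_right ξ _)) hδge
      · rw [Set.eq_empty_iff_forall_notMem]
        rintro x ⟨⟨hxA, hxgt⟩, hxE⟩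
        have := huniq x ⟨hxA, hxE⟩ α₀ hα₀
        rw [this] at hxgt
        exact lt_irrefl _ (Set.mem_Ioi.1 hxgt)
    · refine ⟨A, ⟨fun α hα => hα.1, hAclosed, ?_⟩, ?_⟩
      · intro ξ hξ
        obtain ⟨δ, hδγ, hδpt, hδge⟩ := acc_unbounded hγlim hcof' hclubγ ξ hξ
        exact ⟨δ, ⟨hδγ, hδpt⟩, hδge⟩
      · exact Set.not_nonempty_iff_eq_empty.1 hne


lemma omega2_isLimit : Order.IsSuccLimit omega2 :=
  Cardinal.isSuccLimit_ord (Cardinal.aleph0_le_aleph 2)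


lemma omega2_cof : Ordinal.cof omega2 = Cardinal.aleph 2 := by
  have h2 : Cardinal.aleph 2 = Order.succ (Cardinal.aleph 1) := by
    rw [← Cardinal.aleph_succ, ← Ordinal.add_one_eq_succ, one_add_one_eq_two]
  rw [omega2, h2]
  exact (Cardinal.isRegular_succ (Cardinal.aleph0_le_aleph 1)).cof_eq


lemma exists_stationary (C : Ordinal.{0} → Set Ordinal.{0}) (hC : IsSquareOmega1 C) :
    ∃ β, β < omega1 ∧ StationaryIn
      {α | α < omega2 ∧ Ordinal.cof α = Cardinal.aleph0 ∧ HasOrderType (C α) β} omega2 := by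
  classical
  by_contra hcon
  push_neg at hcon
  set E : Ordinal → Set Ordinal :=
    fun β => {α | α < omega2 ∧ Ordinal.cof α = Cardinal.aleph0 ∧ HasOrderType (C α) β} with hEdef
  have hDl : ∀ β < omega1, ∃ D, ClubIn D omega2 ∧ E β ∩ D = ∅ := by
    intro β hβ
    have := hcon β hβ
    simp only [StationaryIn] at this
    push_neg at this
    obtain ⟨D, hD1, hD2⟩ := this
    exact ⟨D, hD1, hD2⟩
  set D : Ordinal → Set Ordinal := fun β =>
    if h : β < omega1 then (hDl β h).choose else Set.univ with hDdef
  have hDclub : ∀ β < omega1, ClubIn (D β) omega2 ∧ E β ∩ D β = ∅ := by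
    intro β hβ
    simp only [hDdef, dif_pos hβ]
    exact (hDl β hβ).choose_spec
  set eiso := Ordinal.ToType.mk (o := omega1) with heiso
  set g : Ordinal → Ordinal → Ordinal := fun β ξ =>
    if h : β < omega1 ∧ ξ < omega2 then ((hDclub β h.1).1.2.2 ξ h.2).choose else 0 with hgdef
  have hgspec : ∀ β, β < omega1 → ∀ ξ, ξ < omega2 → g β ξ ∈ D β ∧ ξ ≤ g β ξ := by
    intro β hβ ξ hξ
    simp only [hgdef, dif_pos (And.intro hβ hξ)]
    obtain ⟨h1, h2⟩ := ((hDclub β hβ).1.2.2 ξ hξ).choose_spec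
    exact ⟨h1, h2⟩
  set F : Ordinal → Ordinal := fun ξ =>
    max (ξ + 1) (⨆ i : omega1.ToType, g ((eiso.symm i : Set.Iio omega1) : Ordinal) ξ) with hFdef
  have hmkT : Cardinal.mk omega1.ToType = Cardinal.aleph 1 := by
    rw [Cardinal.mk_toType, omega1, Cardinal.card_ord]
  have hF1 : ∀ ξ < omega2, F ξ < omega2 := by
    intro ξ hξ
    apply max_lt (omega2_isLimit.succ_lt hξ)
    apply Ordinal.iSup_lt_ord
    · rw [hmkT, omega2_cof]
      exact Cardinal.aleph_lt_aleph.2 one_lt_two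
    · intro i
      have hmem := (eiso.symm i).2
      exact ((hDclub _ hmem).1).1 ((hgspec _ hmem ξ hξ).1)
  have hF2 : ∀ ξ, ξ < F ξ := fun ξ => lt_of_lt_of_le (lt_add_one ξ) (le_max_left _ _)
  have hF3 : ∀ β, β < omega1 → ∀ ξ, g β ξ ≤ F ξ := by
    intro β hβ ξ
    have : g β ξ = g ((eiso.symm (eiso ⟨β, hβ⟩) : Set.Iio omega1) : Ordinal) ξ := by
      rw [OrderIso.symm_apply_apply]
    rw [this]
    exact le_trans (Ordinal.le_iSup _ (eiso ⟨β, hβ⟩)) (le_max_right _ _)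
  set f : ℕ → Ordinal := fun n => Nat.rec 0 (fun _ ih => F ih) n with hfdef
  have hflt : ∀ n, f n < omega2 := by
    intro n
    induction n with
    | zero => exact pos_iff_ne_zero.2 (Ordinal.isSuccLimit_iff.1 omega2_isLimit).1
    | succ n ih => exact hF1 _ ih
  have hfmono : ∀ n, f n < f (n + 1) := fun n => hF2 (f n)
  set δ := ⨆ n, f n with hδdef
  have hcard : Cardinal.mk ℕ < Ordinal.cof omega2 := by
    rw [Cardinal.mk_nat, omega2_cof]
    exact Cardinal.aleph0_lt_aleph_one.trans (Cardinal.aleph_lt_aleph.2 one_lt_two)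
  have hδ2 : δ < omega2 := Ordinal.iSup_lt_ord hcard hflt
  have hδD : ∀ β, β < omega1 → δ ∈ D β := by
    intro β hβ
    have hpt : IsLimitPt (D β) δ := by
      apply limitPt_of_between hfmono
      intro n
      exact ⟨g β (f n), (hgspec β hβ _ (hflt n)).1, (hgspec β hβ _ (hflt n)).2,
        hF3 β hβ (f n)⟩
    exact (hDclub β hβ).1.2.1 δ hδ2 hpt
  have hδcof : Ordinal.cof δ = Cardinal.aleph0 := cof_iSup_chain hfmono
  have hδlim : Order.IsSuccLimit δ := isLimit_iSup_chain hfmono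
  obtain ⟨_, hcount, _⟩ := hC δ hδ2 hδlim
  obtain ⟨β₀, hβ₀, hhot⟩ := hot_exists (hcount hδcof)
  have hδE : δ ∈ E β₀ := ⟨hδ2, hδcof, hhot⟩
  have := (hDclub β₀ hβ₀).2
  rw [Set.eq_empty_iff_forall_notMem] at this
  exact this δ ⟨hδE, hδD β₀ hβ₀⟩


/-- Given a `□_{ω₁}`-sequence `⟨C_α⟩`, some
`E_β = {α < ω₂ : cf(α) = ω ∧ otp(C_α) = β}` with `β < ω₁` is stationary in `ω₂`, and every
such stationary `E_β` is non-reflecting: every limit `γ < ω₂` carries a cub subset of `γ`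
disjoint from `E_β`. -/
theorem square_gives_nonreflecting_stationary_set (C : Ordinal.{0} → Set Ordinal.{0})
    (hC : IsSquareOmega1 C) :
    (∃ β, β < omega1 ∧ StationaryIn
      {α | α < omega2 ∧ Ordinal.cof α = Cardinal.aleph0 ∧ HasOrderType (C α) β}
      omega2) ∧
    (∀ β, β < omega1 → StationaryIn
      {α | α < omega2 ∧ Ordinal.cof α = Cardinal.aleph0 ∧ HasOrderType (C α) β}
      omega2 →
      ∀ γ, γ < omega2 → Order.IsSuccLimit γ →
        ∃ D : Set Ordinal.{0}, ClubIn D γ ∧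
          D ∩ {α | α < omega2 ∧ Ordinal.cof α = Cardinal.aleph0 ∧
            HasOrderType (C α) β} = ∅) := by
  constructor
  · exact exists_stationary C hC
  · intro β _ _ γ hγ hγlim
    exact nonreflecting C hC β γ hγ hγlim
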